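/- For any fixed x ≠ 1 put Π⁽¹⁾ = (R̂(x) − μ₂(x)·I)/(μ₁(x) − μ₂(x)) and Π⁽²⁾ = I − Π⁽¹⁾, acting on factors 2 and 3 of ℂ² ⊗ ℂ² ⊗ ℂ². Then [Π⁽ⁱ⁾₂₃, R₂₁ R₃₁] = 0 and [Π⁽ⁱ⁾₂₃, (R⁻¹)₁₂ (R⁻¹)₁₃] = 0 for i = 1, 2; hence the eigenspaces of R̂ are left invariant by the tensor square of the fundamental representation of the dual algebra s03_F. -/
import Mathlib


noncomputable section

open Matrix Complex

/-- 4×4 complex matrix reindexed by pairs in `Fin 2 × Fin 2` (lexicographic order). -/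
def pairMat (A : Matrix (Fin 4) (Fin 4) ℂ) :
    Matrix (Fin 2 × Fin 2) (Fin 2 × Fin 2) ℂ :=
  Matrix.of fun p q =>
    A ⟨2 * p.1.val + p.2.val, by omega⟩ ⟨2 * q.1.val + q.2.val, by omega⟩

/-- The exotic R-matrix of the bialgebra S03, as an operator on ℂ² ⊗ ℂ². -/
def RS03 : Matrix (Fin 2 × Fin 2) (Fin 2 × Fin 2) ℂ :=
  (Real.sqrt 2 : ℂ)⁻¹ • pairMat !![1,0,0,1; 0,1,1,0; 0,1,-1,0; -1,0,0,1]

/-- The flip (permutation) operator on ℂ² ⊗ ℂ². -/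
def Pflip : Matrix (Fin 2 × Fin 2) (Fin 2 × Fin 2) ℂ :=
  pairMat !![1,0,0,0; 0,0,1,0; 0,1,0,0; 0,0,0,1]

/-- The Baxterised braid matrix of S03 (overall scalar factor 1/√(2x) omitted),
as an operator on ℂ² ⊗ ℂ². -/
def RhatX (x : ℂ) : Matrix (Fin 2 × Fin 2) (Fin 2 × Fin 2) ℂ :=
  pairMat !![x+1, 0, 0, 1-x;
             0, x+1, x-1, 0;
             0, 1-x, x+1, 0;
             x-1, 0, 0, x+1]

/-- First eigenvalue of `R̂(x)`. -/
def mu1 (x : ℂ) : ℂ := (1 + I) * (x - I)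

/-- Second eigenvalue of `R̂(x)`. -/
def mu2 (x : ℂ) : ℂ := (1 + I) * (1 - I * x)

/-- The projector `Π⁽¹⁾ = (R̂(x) − μ₂(x)·I)/(μ₁(x) − μ₂(x))`. -/
def Proj1 (x : ℂ) : Matrix (Fin 2 × Fin 2) (Fin 2 × Fin 2) ℂ :=
  (mu1 x - mu2 x)⁻¹ • (RhatX x - mu2 x • (1 : Matrix (Fin 2 × Fin 2) (Fin 2 × Fin 2) ℂ))

/-- The projector `Π⁽²⁾ = I − Π⁽¹⁾`. -/
def Proj2 (x : ℂ) : Matrix (Fin 2 × Fin 2) (Fin 2 × Fin 2) ℂ := 1 - Proj1 x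

/-- `A₁₂` : the operator `A` acting on tensor factors 1 and 2 of ℂ² ⊗ ℂ² ⊗ ℂ². -/
def op12 (A : Matrix (Fin 2 × Fin 2) (Fin 2 × Fin 2) ℂ) :
    Matrix (Fin 2 × Fin 2 × Fin 2) (Fin 2 × Fin 2 × Fin 2) ℂ :=
  Matrix.of fun p q => if p.2.2 = q.2.2 then A (p.1, p.2.1) (q.1, q.2.1) else 0

/-- `A₁₃` : the operator `A` acting on tensor factors 1 and 3 of ℂ² ⊗ ℂ² ⊗ ℂ². -/
def op13 (A : Matrix (Fin 2 × Fin 2) (Fin 2 × Fin 2) ℂ) :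
    Matrix (Fin 2 × Fin 2 × Fin 2) (Fin 2 × Fin 2 × Fin 2) ℂ :=
  Matrix.of fun p q => if p.2.1 = q.2.1 then A (p.1, p.2.2) (q.1, q.2.2) else 0

/-- `A₂₃` : the operator `A` acting on tensor factors 2 and 3 of ℂ² ⊗ ℂ² ⊗ ℂ². -/
def op23 (A : Matrix (Fin 2 × Fin 2) (Fin 2 × Fin 2) ℂ) :
    Matrix (Fin 2 × Fin 2 × Fin 2) (Fin 2 × Fin 2 × Fin 2) ℂ :=
  Matrix.of fun p q => if p.1 = q.1 then A (p.2.1, p.2.2) (q.2.1, q.2.2) else 0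



/-! ### Auxiliary material for the proof -/

/-- The constant matrix `K` with `R̂(x) = (x+1)•1 + (1-x)•K`. -/
def Kmat : Matrix (Fin 2 × Fin 2) (Fin 2 × Fin 2) ℂ :=
  pairMat !![0,0,0,1; 0,0,-1,0; 0,1,0,0; -1,0,0,0]

/-- `P·B·P` where `B` is the unnormalised R-matrix. -/
def Mp : Matrix (Fin 2 × Fin 2) (Fin 2 × Fin 2) ℂ :=
  pairMat !![1,0,0,1; 0,-1,1,0; 0,1,1,0; -1,0,0,1]

/-- The unnormalised inverse R-matrix. -/
def Mb : Matrix (Fin 2 × Fin 2) (Fin 2 × Fin 2) ℂ :=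
  pairMat !![1,0,0,-1; 0,1,1,0; 0,1,-1,0; 1,0,0,1]

lemma op12_mul_op13 (A B : Matrix (Fin 2 × Fin 2) (Fin 2 × Fin 2) ℂ) :
    op12 A * op13 B = Matrix.of (fun p q =>
      ∑ k : Fin 2, A (p.1, p.2.1) (k, q.2.1) * B (k, p.2.2) (q.1, q.2.2)) := by
  ext ⟨a, b, c⟩ ⟨d, e, f⟩
  simp [Matrix.mul_apply, op12, op13, Fintype.sum_prod_type, Fin.sum_univ_two]

lemma op23_mul_of (C : Matrix (Fin 2 × Fin 2) (Fin 2 × Fin 2) ℂ)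
    (f : (Fin 2 × Fin 2 × Fin 2) → (Fin 2 × Fin 2 × Fin 2) → ℂ) :
    op23 C * Matrix.of f = Matrix.of (fun p q =>
      ∑ k : Fin 2 × Fin 2, C (p.2.1, p.2.2) k * f (p.1, k.1, k.2) q) := by
  ext ⟨a, b, c⟩ ⟨d, e, f'⟩
  simp [Matrix.mul_apply, op23, Fintype.sum_prod_type, Fin.sum_univ_two]

lemma of_mul_op23 (C : Matrix (Fin 2 × Fin 2) (Fin 2 × Fin 2) ℂ)
    (f : (Fin 2 × Fin 2 × Fin 2) → (Fin 2 × Fin 2 × Fin 2) → ℂ) :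
    Matrix.of f * op23 C = Matrix.of (fun p q =>
      ∑ k : Fin 2 × Fin 2, f p (q.1, k.1, k.2) * C k (q.2.1, q.2.2)) := by
  ext ⟨a, b, c⟩ ⟨d, e, f'⟩
  simp [Matrix.mul_apply, op23, Fintype.sum_prod_type, Fin.sum_univ_two]

set_option maxHeartbeats 2000000 in
/-- Core commutation: `K₂₃` commutes with `(P B P)₁₂ (P B P)₁₃`. -/
lemma Kcomm_Mp : op23 Kmat * (op12 Mp * op13 Mp) = (op12 Mp * op13 Mp) * op23 Kmat := by
  rw [op12_mul_op13, op23_mul_of, of_mul_op23]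
  ext ⟨a, b, c⟩ ⟨d, e, f⟩
  fin_cases a <;> fin_cases b <;> fin_cases c <;> fin_cases d <;> fin_cases e <;> fin_cases f <;>
    norm_num [Kmat, Mp, pairMat, Fintype.sum_prod_type, Fin.sum_univ_two]

set_option maxHeartbeats 2000000 in
/-- Core commutation: `K₂₃` commutes with `(B⁻¹)₁₂ (B⁻¹)₁₃` (up to the scalar). -/
lemma Kcomm_Mb : op23 Kmat * (op12 Mb * op13 Mb) = (op12 Mb * op13 Mb) * op23 Kmat := by
  rw [op12_mul_op13, op23_mul_of, of_mul_op23]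
  ext ⟨a, b, c⟩ ⟨d, e, f⟩
  fin_cases a <;> fin_cases b <;> fin_cases c <;> fin_cases d <;> fin_cases e <;> fin_cases f <;>
    norm_num [Kmat, Mb, pairMat, Fintype.sum_prod_type, Fin.sum_univ_two]

lemma op12_smul (c : ℂ) (A : Matrix (Fin 2 × Fin 2) (Fin 2 × Fin 2) ℂ) :
    op12 (c • A) = c • op12 A := by
  ext p q; simp [op12]

lemma op13_smul (c : ℂ) (A : Matrix (Fin 2 × Fin 2) (Fin 2 × Fin 2) ℂ) :
    op13 (c • A) = c • op13 A := by
  ext p q; simp [op13]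

lemma op23_smul (c : ℂ) (A : Matrix (Fin 2 × Fin 2) (Fin 2 × Fin 2) ℂ) :
    op23 (c • A) = c • op23 A := by
  ext p q; simp [op23]

lemma op23_add (A B : Matrix (Fin 2 × Fin 2) (Fin 2 × Fin 2) ℂ) :
    op23 (A + B) = op23 A + op23 B := by
  ext p q
  simp only [op23, Matrix.of_apply, Matrix.add_apply]
  split <;> simp

lemma op23_one : op23 (1 : Matrix (Fin 2 × Fin 2) (Fin 2 × Fin 2) ℂ) = 1 := by
  ext ⟨a, b, c⟩ ⟨d, e, f⟩
  simp [op23, Matrix.one_apply, Prod.ext_iff, ite_and]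

lemma sqrt2_mul_self : ((Real.sqrt 2 : ℝ) : ℂ) * ((Real.sqrt 2 : ℝ) : ℂ) = 2 := by
  norm_cast
  rw [Real.mul_self_sqrt] <;> norm_num

/-- `P R P` is `(√2)⁻¹ • Mp`. -/
lemma PRP_eq : Pflip * RS03 * Pflip = (Real.sqrt 2 : ℂ)⁻¹ • Mp := by
  ext ⟨a, b⟩ ⟨c, d⟩
  fin_cases a <;> fin_cases b <;> fin_cases c <;> fin_cases d <;>
    norm_num [Matrix.mul_apply, Pflip, RS03, Mp, pairMat, Fintype.sum_prod_type,
      Fin.sum_univ_two, Matrix.vecHead, Matrix.vecTail]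

lemma base_mul_Mb : pairMat !![1,0,0,1; 0,1,1,0; 0,1,-1,0; -1,0,0,1] * Mb
    = (2 : ℂ) • (1 : Matrix (Fin 2 × Fin 2) (Fin 2 × Fin 2) ℂ) := by
  ext ⟨a, b⟩ ⟨c, d⟩
  fin_cases a <;> fin_cases b <;> fin_cases c <;> fin_cases d <;>
    norm_num [Matrix.mul_apply, Mb, pairMat, Matrix.one_apply, Fintype.sum_prod_type,
      Fin.sum_univ_two, Prod.ext_iff, Matrix.vecHead, Matrix.vecTail]

/-- `RS03⁻¹` is `(√2)⁻¹ • Mb`. -/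
lemma RS03_inv_eq : RS03⁻¹ = (Real.sqrt 2 : ℂ)⁻¹ • Mb := by
  refine Matrix.inv_eq_right_inv ?_
  rw [RS03, Matrix.smul_mul, Matrix.mul_smul, smul_smul, base_mul_Mb, smul_smul]
  rw [show ((Real.sqrt 2 : ℝ) : ℂ)⁻¹ * ((Real.sqrt 2 : ℝ):ℂ)⁻¹ * 2 = 1 by
    rw [← mul_inv, sqrt2_mul_self]; norm_num]
  simp

/-- `Proj1 x` is a linear combination of `1` and `Kmat`. -/
lemma Proj1_eq (x : ℂ) : Proj1 x =
    ((mu1 x - mu2 x)⁻¹ * (x + 1 - mu2 x)) • (1 : Matrix (Fin 2 × Fin 2) (Fin 2 × Fin 2) ℂ)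
      + ((mu1 x - mu2 x)⁻¹ * (1 - x)) • Kmat := by
  ext ⟨a, b⟩ ⟨c, d⟩
  fin_cases a <;> fin_cases b <;> fin_cases c <;> fin_cases d <;>
    · norm_num [Proj1, RhatX, Kmat, pairMat, Matrix.one_apply, Prod.ext_iff]
      try ring

/-- If `K₂₃` commutes with `C` then so does `a•1 + b•K` in place of `K`. -/
lemma comm_of_comb {C : Matrix (Fin 2 × Fin 2 × Fin 2) (Fin 2 × Fin 2 × Fin 2) ℂ}
    (h : op23 Kmat * C = C * op23 Kmat) (a b : ℂ) :
    op23 (a • (1 : Matrix (Fin 2 × Fin 2) (Fin 2 × Fin 2) ℂ) + b • Kmat) * C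
      = C * op23 (a • (1 : Matrix (Fin 2 × Fin 2) (Fin 2 × Fin 2) ℂ) + b • Kmat) := by
  rw [op23_add, op23_smul, op23_smul, op23_one]
  simp only [add_mul, mul_add, Matrix.smul_mul, Matrix.mul_smul, one_mul, mul_one, h]

lemma comm_smul {C X : Matrix (Fin 2 × Fin 2 × Fin 2) (Fin 2 × Fin 2 × Fin 2) ℂ}
    (h : X * C = C * X) (c : ℂ) : X * (c • C) = (c • C) * X := by
  rw [Matrix.mul_smul, Matrix.smul_mul, h]

/-- The projectors `Π⁽¹⁾₂₃` and `Π⁽²⁾₂₃` onto the eigenspaces of `R̂` commute with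
the coproduct matrices `R₂₁ R₃₁` and `(R⁻¹)₁₂ (R⁻¹)₁₃` of the tensor square of the
fundamental representation of `s03_F`: hence the eigenspaces of `R̂` are invariant. -/
theorem Proj23_commutes_with_coproduct (x : ℂ) (hx : x ≠ 1) :
    op23 (Proj1 x) * (op12 (Pflip * RS03 * Pflip) * op13 (Pflip * RS03 * Pflip)) =
      (op12 (Pflip * RS03 * Pflip) * op13 (Pflip * RS03 * Pflip)) * op23 (Proj1 x) ∧
    op23 (Proj2 x) * (op12 (Pflip * RS03 * Pflip) * op13 (Pflip * RS03 * Pflip)) =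
      (op12 (Pflip * RS03 * Pflip) * op13 (Pflip * RS03 * Pflip)) * op23 (Proj2 x) ∧
    op23 (Proj1 x) * (op12 RS03⁻¹ * op13 RS03⁻¹) =
      (op12 RS03⁻¹ * op13 RS03⁻¹) * op23 (Proj1 x) ∧
    op23 (Proj2 x) * (op12 RS03⁻¹ * op13 RS03⁻¹) =
      (op12 RS03⁻¹ * op13 RS03⁻¹) * op23 (Proj2 x) := by
  have hC1 : op12 (Pflip * RS03 * Pflip) * op13 (Pflip * RS03 * Pflip)
      = ((Real.sqrt 2 : ℂ)⁻¹ * (Real.sqrt 2 : ℂ)⁻¹) • (op12 Mp * op13 Mp) := by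
    rw [PRP_eq, op12_smul, op13_smul, Matrix.smul_mul, Matrix.mul_smul, smul_smul]
  have hC2 : op12 RS03⁻¹ * op13 RS03⁻¹
      = ((Real.sqrt 2 : ℂ)⁻¹ * (Real.sqrt 2 : ℂ)⁻¹) • (op12 Mb * op13 Mb) := by
    rw [RS03_inv_eq, op12_smul, op13_smul, Matrix.smul_mul, Matrix.mul_smul, smul_smul]
  have h1 : ∀ C : Matrix (Fin 2 × Fin 2 × Fin 2) (Fin 2 × Fin 2 × Fin 2) ℂ,
      op23 Kmat * C = C * op23 Kmat →
      op23 (Proj1 x) * C = C * op23 (Proj1 x) := by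
    intro C hC
    rw [Proj1_eq]
    exact comm_of_comb hC _ _
  have h2 : ∀ C : Matrix (Fin 2 × Fin 2 × Fin 2) (Fin 2 × Fin 2 × Fin 2) ℂ,
      op23 (Proj1 x) * C = C * op23 (Proj1 x) →
      op23 (Proj2 x) * C = C * op23 (Proj2 x) := by
    intro C hC
    have hp : Proj2 x = (1 : ℂ) • (1 : Matrix (Fin 2 × Fin 2) (Fin 2 × Fin 2) ℂ)
        + (-1 : ℂ) • Proj1 x := by
      simp [Proj2]
      abel
    rw [hp, op23_add, op23_smul, op23_smul, op23_one]
    simp only [add_mul, mul_add, Matrix.smul_mul, Matrix.mul_smul, one_mul, mul_one, hC]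
  refine ⟨?_, ?_, ?_, ?_⟩
  · rw [hC1]; exact comm_smul (h1 _ Kcomm_Mp) _
  · rw [hC1]; exact h2 _ (comm_smul (h1 _ Kcomm_Mp) _)
  · rw [hC2]; exact comm_smul (h1 _ Kcomm_Mb) _
  · rw [hC2]; exact h2 _ (comm_smul (h1 _ Kcomm_Mb) _)
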